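/- arXiv:2205.10121 — 3 statements merged into one kernel-verified Lean document; each statement's English description precedes it below -/
import Mathlib

section
/- Suppose the terminal membrane potential satisfies 0 ≤ v(T) < V_th, the initial potential v(0) = 0, the accumulated output over T steps equals m·V_th for some integer m ∈ {0,1,…,T}, and v(T) = T·W·s̄ − m·V_th where s̄ is the average input over T steps. Then T·W·s̄ − V_th < m·V_th ≤ T·W·s̄, and hence the average output spike s̄_out = m·V_th/T equals (V_th/T)·Clip(⌊T·W·s̄/V_th⌋, 0, T). -/
/-- ClipFloor characterization of the expected SNN output with zero initial potential. -/
theorem clipfloor_characterization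
    (T : ℕ) (hT : 0 < T) (Vth Ws vT : ℝ) (hVth : 0 < Vth)
    (m : ℤ) (hm0 : 0 ≤ m) (hmT : m ≤ (T : ℤ))
    (hvT0 : 0 ≤ vT) (hvT1 : vT < Vth)
    (hdyn : vT = T * Ws - (m : ℝ) * Vth) :
    (T * Ws - Vth < (m : ℝ) * Vth ∧ (m : ℝ) * Vth ≤ T * Ws) ∧
      (m : ℝ) * Vth / T
        = Vth / T * ((max 0 (min ⌊T * Ws / Vth⌋ (T : ℤ)) : ℤ) : ℝ) := by
  have h1 : (m : ℝ) * Vth ≤ T * Ws := by linarith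
  have h2 : T * Ws - Vth < (m : ℝ) * Vth := by linarith
  refine ⟨⟨h2, h1⟩, ?_⟩
  have hfloor : ⌊T * Ws / Vth⌋ = m := by
    rw [Int.floor_eq_iff]
    constructor
    · rw [le_div_iff₀ hVth]; linarith
    · rw [div_lt_iff₀ hVth]; push_cast; linarith
  rw [hfloor, min_eq_left hmT, max_eq_right hm0]
  ring
end

section
/- Let H_1, …, H_n be symmetric PSD matrices with H_{ℓ} = A_ℓᵀ H_{ℓ+1} A_ℓ for matrices A_ℓ (ℓ = 1,…,n−1), and let vectors e_ℓ satisfy the recursion e_ℓ = A_{ℓ-1} e_{ℓ-1} + c_ℓ for ℓ = 2,…,n with e_1 = c_1. Then e_nᵀ H_n e_n ≤ ∑_{ℓ=1}^{n} 2^{n−ℓ+1} · c_ℓᵀ H_ℓ c_ℓ (in fact the ℓ = n term can be taken with coefficient 2). -/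
/-!
Write `‖v‖²_H` for `vᵀ H v`. Since `H_ℓ = A_ℓᵀ H_{ℓ+1} A_ℓ`, the map `A_ℓ` is an isometry from
`‖·‖_{H_ℓ}` to `‖·‖_{H_{ℓ+1}}`, and for a positive semidefinite `H` the parallelogram law gives
`‖x + y‖²_H ≤ 2‖x‖²_H + 2‖y‖²_H`. Together they yield the one-step inequality
`‖e_{ℓ+1}‖² ≤ 2‖e_ℓ‖² + 2‖c_{ℓ+1}‖²`, and unrolling it from `‖e_1‖² = ‖c_1‖² ≤ 2‖c_1‖²` gives the
geometric weights `2^{n-ℓ+1}`.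
-/

open Matrix Finset

theorem Matrix.PosSemidef.dotProduct_mulVec_add_le {ι : Type*} [Fintype ι]
    {M : Matrix ι ι ℝ} (hM : M.PosSemidef) (x y : ι → ℝ) :
    (x + y) ⬝ᵥ M *ᵥ (x + y) ≤ 2 * (x ⬝ᵥ M *ᵥ x) + 2 * (y ⬝ᵥ M *ᵥ y) := by
  have hdiff : 0 ≤ (x - y) ⬝ᵥ M *ᵥ (x - y) := by simpa using hM.dotProduct_mulVec_nonneg (x - y)
  have hsymm : x ⬝ᵥ M *ᵥ y = y ⬝ᵥ M *ᵥ x := by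
    rw [dotProduct_mulVec, ← mulVec_transpose, (isHermitian_iff_isSymm.mp hM.1).eq, dotProduct_comm]
  simp only [mulVec_add, mulVec_sub, dotProduct_add, dotProduct_sub, add_dotProduct,
    sub_dotProduct] at hdiff ⊢
  linarith

theorem Matrix.mulVec_dotProduct_mulVec_mulVec {R m n : Type*} [CommSemiring R] [Fintype m]
    [Fintype n] (A : Matrix m n R) (H : Matrix m m R) (x : n → R) :
    A *ᵥ x ⬝ᵥ H *ᵥ (A *ᵥ x) = x ⬝ᵥ (Aᵀ * H * A) *ᵥ x := by
  rw [← mulVec_mulVec, ← mulVec_mulVec, dotProduct_mulVec x, vecMul_transpose]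

theorem sum_Icc_two_pow_mul_succ (q : ℕ → ℝ) (m : ℕ) :
    ∑ ℓ ∈ Icc 1 (m + 1), (2 : ℝ) ^ (m + 1 - ℓ + 1) * q ℓ
      = 2 * ∑ ℓ ∈ Icc 1 m, (2 : ℝ) ^ (m - ℓ + 1) * q ℓ + 2 * q (m + 1) := by
  rw [sum_Icc_succ_top (by omega), mul_sum, Nat.sub_self, zero_add, pow_one]
  congr 1
  refine sum_congr rfl fun ℓ hℓ => ?_
  rw [Nat.sub_add_comm (mem_Icc.mp hℓ).2, pow_succ]
  ring

theorem le_sum_Icc_two_pow_mul {E q : ℕ → ℝ} {n : ℕ} (hn : 1 ≤ n) (hE₁ : E 1 ≤ 2 * q 1)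
    (hstep : ∀ m, 1 ≤ m → m + 1 ≤ n → E (m + 1) ≤ 2 * E m + 2 * q (m + 1)) :
    E n ≤ ∑ ℓ ∈ Icc 1 n, (2 : ℝ) ^ (n - ℓ + 1) * q ℓ := by
  induction n, hn using Nat.le_induction with
  | base => simpa using hE₁
  | succ m hm ih =>
    rw [sum_Icc_two_pow_mul_succ]
    have hE := ih fun k hk hkm => hstep k hk (by omega)
    linarith [hstep m hm le_rfl]

/-- Theorem 1: the final conversion error in the Hessian quadratic form is bounded by
a weighted sum of local conversion errors,
`eₙᵀ Hₙ eₙ ≤ ∑_{ℓ=1}^n 2^{n-ℓ+1} cₗᵀ Hₗ cₗ`. -/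
theorem conversion_error_bound
    (n : ℕ) (hn : 1 ≤ n) (d : ℕ → ℕ)
    (H : (ℓ : ℕ) → Matrix (Fin (d ℓ)) (Fin (d ℓ)) ℝ)
    (A : (ℓ : ℕ) → Matrix (Fin (d (ℓ + 1))) (Fin (d ℓ)) ℝ)
    (e c : (ℓ : ℕ) → Fin (d ℓ) → ℝ)
    (hPSD : ∀ ℓ, (H ℓ).PosSemidef)
    (hH : ∀ ℓ, 1 ≤ ℓ → ℓ + 1 ≤ n → H ℓ = (A ℓ)ᵀ * H (ℓ + 1) * A ℓ)
    (he1 : e 1 = c 1)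
    (hrec : ∀ ℓ, 1 ≤ ℓ → ℓ + 1 ≤ n →
      e (ℓ + 1) = (A ℓ).mulVec (e ℓ) + c (ℓ + 1)) :
    e n ⬝ᵥ (H n).mulVec (e n)
      ≤ ∑ ℓ ∈ Finset.Icc 1 n,
          (2 : ℝ) ^ (n - ℓ + 1) * (c ℓ ⬝ᵥ (H ℓ).mulVec (c ℓ)) := by
  refine le_sum_Icc_two_pow_mul (E := fun ℓ => e ℓ ⬝ᵥ H ℓ *ᵥ e ℓ) hn ?_ fun m hm hmn => ?_
  · have hc₁ : 0 ≤ c 1 ⬝ᵥ H 1 *ᵥ c 1 := by simpa using (hPSD 1).dotProduct_mulVec_nonneg (c 1)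
    simp only [he1]
    linarith
  · have hstep := (hPSD (m + 1)).dotProduct_mulVec_add_le (A m *ᵥ e m) (c (m + 1))
    rwa [mulVec_dotProduct_mulVec_mulVec, ← hH m hm hmn, ← hrec m hm hmn] at hstep
end

section
/- Let v(0) ∈ ℝ be a nonzero initial membrane potential of an IF neuron with soft reset, threshold V_th > 0, T steps, and total weighted input T·x over T steps. If the terminal potential lies in [0, V_th), then the total spike count m satisfies (T·x + v(0))/V_th − 1 < m ≤ (T·x + v(0))/V_th, and hence m = Clip(⌊(T·x + v(0))/V_th⌋, 0, T) provided 0 ≤ ⌊(T·x + v(0))/V_th⌋ ≤ T. -/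
/-- ClipFloor with nonzero initial membrane potential: if the terminal potential lies in
`[0, V_th)`, then `(T·x + v₀)/V_th - 1 < m ≤ (T·x + v₀)/V_th`, and hence
`m = Clip(⌊(T·x + v₀)/V_th⌋, 0, T)` provided the floor lies in `[0, T]`. -/
theorem clipfloor_with_initial_potential
    (T : ℕ) (hT : 0 < T) (Vth x v0 vT : ℝ) (hVth : 0 < Vth) (hv0 : v0 ≠ 0)
    (m : ℤ) (hm0 : 0 ≤ m) (hmT : m ≤ (T : ℤ))
    (hdyn : vT = v0 + T * x - (m : ℝ) * Vth)
    (hvT0 : 0 ≤ vT) (hvT1 : vT < Vth) :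
    ((T * x + v0) / Vth - 1 < (m : ℝ) ∧ (m : ℝ) ≤ (T * x + v0) / Vth) ∧
      (0 ≤ ⌊(T * x + v0) / Vth⌋ → ⌊(T * x + v0) / Vth⌋ ≤ (T : ℤ) →
        m = max 0 (min ⌊(T * x + v0) / Vth⌋ (T : ℤ))) := by
  have h1 : (m : ℝ) ≤ (T * x + v0) / Vth := by
    rw [le_div_iff₀ hVth]; nlinarith
  have h2 : (T * x + v0) / Vth - 1 < (m : ℝ) := by
    rw [sub_lt_iff_lt_add, div_lt_iff₀ hVth]; nlinarith
  have hfl : ⌊(T * x + v0) / Vth⌋ = m := by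
    rw [Int.floor_eq_iff]
    refine ⟨by push_cast; linarith, ?_⟩
    push_cast; linarith
  refine ⟨⟨h2, h1⟩, fun _ _ => ?_⟩
  rw [hfl, min_eq_left hmT, max_eq_right hm0]
end
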